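/- If the (CF) property holds for every subhierarchy ℬ of 𝒜 (including 𝒜 itself) — i.e. for each subhierarchy, among strategies for it there exists one of minimal total expected cost whose first performed test is the test for the root attribute of the subhierarchy — then the coarse-to-fine strategy minimizes the total expected cost E₀[C_test(T)] + c*·E₀[|Ŷ(T)|] over all strategies for 𝒜. -/

import Mathlib

open Finset

/-- A tree-structured attribute hierarchy on a finite pattern set `Y`: a finite family of
nonempty attributes containing `𝒴` itself, any two of which are disjoint or nested, and
in which every singleton is the intersection of the attributes containing it. -/
structure Hierarchy (Y : Type*) [Fintype Y] [DecidableEq Y] where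
  attrs : Finset (Finset Y)
  univ_mem : Finset.univ ∈ attrs
  nonempty_of_mem : ∀ A ∈ attrs, A.Nonempty
  nested : ∀ A ∈ attrs, ∀ B ∈ attrs, A ∩ B = ∅ ∨ A ⊆ B ∨ B ⊆ A
  singleton_inf : ∀ y : Y, (attrs.filter fun A => y ∈ A).inf id = {y}

/-- A testing strategy: a finite binary tree whose internal nodes are labeled by tests;
at each node the test is performed, the right subtree being followed on a positive
outcome and the left subtree on a null outcome. -/
inductive Strategy (ι : Type*) where
  | leaf : Strategy ι
  | node : ι → Strategy ι → Strategy ι → Strategy ι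

namespace Strategy

variable {ι : Type*} [DecidableEq ι]

/-- The set of tests performed on outcome `ω` (`ω i = false` means test `i` returned `0`). -/
def performed : Strategy ι → (ι → Bool) → Finset ι
  | leaf, _ => ∅
  | node i t0 t1, ω => insert i (if ω i then performed t1 ω else performed t0 ω)

/-- The zero set: performed tests that returned `0`. -/
def zeroSet : Strategy ι → (ι → Bool) → Finset ι
  | leaf, _ => ∅
  | node i t0 t1, ω => if ω i then zeroSet t1 ω else insert i (zeroSet t0 ω)

/-- No test occurs twice along a root-to-leaf branch (relative to tests already used). -/
def noRepeatFrom : Strategy ι → Finset ι → Prop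
  | leaf, _ => True
  | node i t0 t1, used =>
      i ∉ used ∧ noRepeatFrom t0 (insert i used) ∧ noRepeatFrom t1 (insert i used)

/-- No test occurs twice along any root-to-leaf branch. -/
def noRepeat (T : Strategy ι) : Prop := T.noRepeatFrom ∅

/-- All node labels of the strategy belong to `S`. -/
def labelsIn : Strategy ι → Finset ι → Prop
  | leaf, _ => True
  | node i t0 t1, S => i ∈ S ∧ labelsIn t0 S ∧ labelsIn t1 S

end Strategy

/-- Probability of the elementary outcome `ω` when the tests are mutually independent
and test `i` returns `0` with probability `pw i` (its power). -/
def pOmega {ι : Type*} [Fintype ι] (pw : ι → ℝ) (ω : ι → Bool) : ℝ :=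
  ∏ i, if ω i then 1 - pw i else pw i

/-- Probability of an event (a set of outcomes) under the background product measure. -/
def probOf {ι : Type*} [Fintype ι] [DecidableEq ι] (pw : ι → ℝ)
    (E : Finset (ι → Bool)) : ℝ :=
  ∑ ω ∈ E, pOmega pw ω

/-- Expected testing cost of a strategy: `Σ_i c i · P₀(test i is performed)`. -/
def testCost {ι : Type*} [Fintype ι] [DecidableEq ι] (pw cst : ι → ℝ)
    (T : Strategy ι) : ℝ :=
  ∑ i, cst i * probOf pw (Finset.univ.filter fun ω => i ∈ T.performed ω)

section Augmented

variable {Y : Type*} [Fintype Y] [DecidableEq Y]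

/-- Index set of the augmented hierarchy: the original attributes together with, for
each pattern `y`, an extra copy of `{y}` carrying a perfect test. -/
def AugIdx (H : Hierarchy Y) : Type _ := {A : Finset Y // A ∈ H.attrs} ⊕ Y

instance (H : Hierarchy Y) : Fintype (AugIdx H) :=
  inferInstanceAs (Fintype ({A : Finset Y // A ∈ H.attrs} ⊕ Y))

instance (H : Hierarchy Y) : DecidableEq (AugIdx H) :=
  inferInstanceAs (DecidableEq ({A : Finset Y // A ∈ H.attrs} ⊕ Y))

/-- The set of patterns covered by an augmented attribute. -/
def augSet (H : Hierarchy Y) : AugIdx H → Finset Y :=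
  Sum.elim (fun A => A.val) (fun y => {y})

/-- Powers in the augmented hierarchy: the original power `β A` on original attributes,
and power `1` on the perfect singleton tests. -/
def augPow (H : Hierarchy Y) (β : Finset Y → ℝ) : AugIdx H → ℝ :=
  Sum.elim (fun A => β A.val) (fun _ => 1)

/-- Costs in the augmented hierarchy: the original cost `c A` on original attributes,
and cost `c*` on the perfect singleton tests. -/
def augCost (H : Hierarchy Y) (c : Finset Y → ℝ) (cstar : ℝ) : AugIdx H → ℝ :=
  Sum.elim (fun A => c A.val) (fun _ => cstar)

/-- A set of augmented attributes is a covering if its members cover all of `𝒴`. -/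
def IsCovering (H : Hierarchy Y) (Z : Finset (AugIdx H)) : Prop :=
  Z.sup (augSet H) = Finset.univ

instance (H : Hierarchy Y) (Z : Finset (AugIdx H)) : Decidable (IsCovering H Z) :=
  inferInstanceAs (Decidable (_ = _))

/-- The no-error constraint: almost surely under the background measure, the zero set of
the strategy is a covering. -/
def NoError (H : Hierarchy Y) (β : Finset Y → ℝ) (T : Strategy (AugIdx H)) : Prop :=
  probOf (augPow H β)
    (Finset.univ.filter fun ω => ¬ IsCovering H (T.zeroSet ω)) = 0

end Augmented

section FixedHierarchy

variable {Y : Type*} [Fintype Y] [DecidableEq Y]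

/-- Index type of the tests of a fixed hierarchy: one test per attribute. -/
def AttrIdx (H : Hierarchy Y) : Type _ := {A : Finset Y // A ∈ H.attrs}

instance (H : Hierarchy Y) : Fintype (AttrIdx H) :=
  inferInstanceAs (Fintype {A : Finset Y // A ∈ H.attrs})

instance (H : Hierarchy Y) : DecidableEq (AttrIdx H) :=
  inferInstanceAs (DecidableEq {A : Finset Y // A ∈ H.attrs})

/-- The set `Ŷ(T)` of filtered patterns of a strategy on a given outcome, relative to
the pattern set `B₀`: those patterns of `B₀` not ruled out by any performed test. -/
def survivorsIn (H : Hierarchy Y) (B₀ : Finset Y) (T : Strategy (AttrIdx H))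
    (ω : AttrIdx H → Bool) : Finset Y :=
  B₀ \ (T.zeroSet ω).sup (fun i => i.val)

/-- The set `Ŷ(𝒳)` of patterns filtered by all the tests of the hierarchy. -/
def survivorsAll (H : Hierarchy Y) (ω : AttrIdx H → Bool) : Finset Y :=
  Finset.univ \ (Finset.univ.filter fun i : AttrIdx H => ω i = false).sup (fun i => i.val)

/-- Total expected cost of a strategy relative to pattern set `B₀`: expected testing
cost plus `c*` times the expected number of filtered patterns. -/
def totalCostOn (H : Hierarchy Y) (pw cst : AttrIdx H → ℝ) (cstar : ℝ)
    (B₀ : Finset Y) (T : Strategy (AttrIdx H)) : ℝ :=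
  testCost pw cst T
    + cstar * ∑ ω : AttrIdx H → Bool,
        pOmega pw ω * ((survivorsIn H B₀ T ω).card : ℝ)

/-- A strategy is coarse-to-fine if, on every outcome, an attribute is tested if and
only if each of its strict ancestors has been tested and returned a positive answer. -/
def IsCTF (H : Hierarchy Y) (T : Strategy (AttrIdx H)) : Prop :=
  ∀ ω, T.performed ω
    = Finset.univ.filter fun i : AttrIdx H =>
        ∀ j : AttrIdx H, i.val ⊂ j.val → ω j = true

end FixedHierarchy

variable {Y : Type*} [Fintype Y] [DecidableEq Y]

/-- The tests of the subhierarchy rooted at `B₀`: all attributes contained in `B₀`. -/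
def subAttrs (H : Hierarchy Y) (B₀ : Finset Y) : Finset (AttrIdx H) :=
  Finset.univ.filter fun i : AttrIdx H => i.val ⊆ B₀

namespace Strategy

variable {ι : Type*} [DecidableEq ι]

/-- All node labels of a strategy. -/
def labels : Strategy ι → Finset ι
  | leaf => ∅
  | node i t0 t1 => insert i (labels t0 ∪ labels t1)

theorem performed_subset_labels : ∀ (T : Strategy ι) (ω), T.performed ω ⊆ T.labels
  | leaf, _ => by simp [performed, labels]
  | node i t0 t1, ω => by
      simp only [performed, labels]
      apply insert_subset_insert
      split
      · exact (performed_subset_labels t1 ω).trans subset_union_right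
      · exact (performed_subset_labels t0 ω).trans subset_union_left

theorem zeroSet_subset_labels : ∀ (T : Strategy ι) (ω), T.zeroSet ω ⊆ T.labels
  | leaf, _ => by simp [zeroSet, labels]
  | node i t0 t1, ω => by
      simp only [zeroSet, labels]
      split
      · exact (zeroSet_subset_labels t1 ω).trans ((subset_union_right).trans (subset_insert _ _))
      · exact insert_subset_insert _ ((zeroSet_subset_labels t0 ω).trans subset_union_left)

theorem noRepeatFrom_anti : ∀ (T : Strategy ι) {u v : Finset ι}, u ⊆ v →
    T.noRepeatFrom v → T.noRepeatFrom u
  | leaf, _, _, _, _ => trivial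
  | node i t0 t1, u, v, huv, h => by
      obtain ⟨h1, h2, h3⟩ := h
      exact ⟨fun hu => h1 (huv hu),
        noRepeatFrom_anti t0 (insert_subset_insert _ huv) h2,
        noRepeatFrom_anti t1 (insert_subset_insert _ huv) h3⟩

theorem not_mem_labels_of_noRepeatFrom : ∀ (T : Strategy ι) {u : Finset ι},
    T.noRepeatFrom u → ∀ i ∈ u, i ∉ T.labels
  | leaf, _, _, _, _ => by simp [labels]
  | node j t0 t1, u, h, i, hi => by
      obtain ⟨h1, h2, h3⟩ := h
      simp only [labels, mem_insert, mem_union]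
      push_neg
      refine ⟨fun he => h1 (he ▸ hi), ?_, ?_⟩
      · exact not_mem_labels_of_noRepeatFrom t0 h2 i (mem_insert_of_mem hi)
      · exact not_mem_labels_of_noRepeatFrom t1 h3 i (mem_insert_of_mem hi)

theorem noRepeatFrom_union : ∀ (T : Strategy ι) {u v : Finset ι},
    T.noRepeatFrom v → (∀ i ∈ u, i ∉ T.labels) → T.noRepeatFrom (u ∪ v)
  | leaf, _, _, _, _ => trivial
  | node i t0 t1, u, v, h, hdisj => by
      obtain ⟨h1, h2, h3⟩ := h
      have hlab : i ∈ (node i t0 t1).labels := by simp [labels]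
      refine ⟨?_, ?_, ?_⟩
      · intro hm
        rcases mem_union.mp hm with hm | hm
        · exact hdisj i hm hlab
        · exact h1 hm
      · rw [show insert i (u ∪ v) = u ∪ insert i v by
          rw [Finset.union_insert]]
        exact noRepeatFrom_union t0 h2 fun j hj hjl =>
          hdisj j hj (by simp [labels, hjl])
      · rw [show insert i (u ∪ v) = u ∪ insert i v by
          rw [Finset.union_insert]]
        exact noRepeatFrom_union t1 h3 fun j hj hjl =>
          hdisj j hj (by simp [labels, hjl])

theorem noRepeatFrom_of_disjoint {T : Strategy ι} {u : Finset ι}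
    (h : T.noRepeat) (hd : ∀ i ∈ u, i ∉ T.labels) : T.noRepeatFrom u := by
  have := noRepeatFrom_union T (v := ∅) h hd
  rwa [Finset.union_empty] at this

theorem labelsIn_iff : ∀ (T : Strategy ι) (S : Finset ι), T.labelsIn S ↔ T.labels ⊆ S
  | leaf, S => by simp [labelsIn, labels]
  | node i t0 t1, S => by
      simp [labelsIn, labels, Finset.insert_subset_iff, Finset.union_subset_iff,
        labelsIn_iff t0 S, labelsIn_iff t1 S]

theorem performed_update {i : ι} : ∀ (T : Strategy ι), i ∉ T.labels →
    ∀ (ω : ι → Bool) (b : Bool), T.performed (Function.update ω i b) = T.performed ω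
  | leaf, _, _, _ => rfl
  | node j t0 t1, h, ω, b => by
      simp only [labels, mem_insert, mem_union] at h
      push_neg at h
      obtain ⟨hji, h0, h1⟩ := h
      simp only [performed, Function.update_of_ne (Ne.symm hji),
        performed_update t0 h0 ω b, performed_update t1 h1 ω b]

theorem zeroSet_update {i : ι} : ∀ (T : Strategy ι), i ∉ T.labels →
    ∀ (ω : ι → Bool) (b : Bool), T.zeroSet (Function.update ω i b) = T.zeroSet ω
  | leaf, _, _, _ => rfl
  | node j t0 t1, h, ω, b => by
      simp only [labels, mem_insert, mem_union] at h
      push_neg at h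
      obtain ⟨hji, h0, h1⟩ := h
      simp only [zeroSet, Function.update_of_ne (Ne.symm hji),
        zeroSet_update t0 h0 ω b, zeroSet_update t1 h1 ω b]

/-- Graft `B` at every leaf of `A`. -/
def append : Strategy ι → Strategy ι → Strategy ι
  | leaf, B => B
  | node i t0 t1, B => node i (append t0 B) (append t1 B)

theorem labels_append : ∀ (A B : Strategy ι), (A.append B).labels = A.labels ∪ B.labels
  | leaf, B => by simp [append, labels]
  | node i t0 t1, B => by
      simp [append, labels, labels_append t0 B, labels_append t1 B]
      ext j; simp; tauto

theorem performed_append : ∀ (A B : Strategy ι) (ω),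
    (A.append B).performed ω = A.performed ω ∪ B.performed ω
  | leaf, B, ω => by simp [append, performed]
  | node i t0 t1, B, ω => by
      simp only [append, performed]
      split
      · rw [performed_append t1 B ω, Finset.insert_union]
      · rw [performed_append t0 B ω, Finset.insert_union]

theorem zeroSet_append : ∀ (A B : Strategy ι) (ω),
    (A.append B).zeroSet ω = A.zeroSet ω ∪ B.zeroSet ω
  | leaf, B, ω => by simp [append, zeroSet]
  | node i t0 t1, B, ω => by
      simp only [append, zeroSet]
      split
      · rw [zeroSet_append t1 B ω]
      · rw [zeroSet_append t0 B ω, Finset.insert_union]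

theorem noRepeatFrom_append : ∀ (A B : Strategy ι) {u : Finset ι},
    A.noRepeatFrom u → B.noRepeatFrom (u ∪ A.labels) → (A.append B).noRepeatFrom u
  | leaf, B, u, _, hB => by
      simpa [append, labels] using noRepeatFrom_anti B (by simp) hB
  | node i t0 t1, B, u, hA, hB => by
      obtain ⟨h1, h2, h3⟩ := hA
      refine ⟨h1, ?_, ?_⟩
      · exact noRepeatFrom_append t0 B h2 (noRepeatFrom_anti B
          (by simp only [labels]; intro j; simp; tauto) hB)
      · exact noRepeatFrom_append t1 B h3 (noRepeatFrom_anti B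
          (by simp only [labels]; intro j; simp; tauto) hB)

theorem eq_leaf_of_labels_subset_empty {T : Strategy ι} (h : T.labels ⊆ ∅) :
    T = leaf := by
  cases T with
  | leaf => rfl
  | node i t0 t1 => exact absurd (h (by simp [labels])) (Finset.notMem_empty i)

end Strategy
section Prob

variable {ι : Type*} [Fintype ι] [DecidableEq ι] (pw cst : ι → ℝ)

theorem pOmega_nonneg (hpw : ∀ i, 0 ≤ pw i ∧ pw i ≤ 1) (ω : ι → Bool) :
    0 ≤ pOmega pw ω := by
  refine Finset.prod_nonneg fun i _ => ?_
  rcases hpw i with ⟨h0, h1⟩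
  split <;> linarith

theorem sum_pOmega_one : ∑ ω : ι → Bool, pOmega pw ω = 1 := by
  have := (Fintype.prod_sum (fun (i : ι) (b : Bool) => if b then 1 - pw i else pw i)).symm
  unfold pOmega
  rw [this]
  rw [Finset.prod_eq_one]
  intro i _
  simp [Fintype.sum_bool]

/-- Product of factors over coordinates other than `i`. -/
def pHat (i : ι) (ω : ι → Bool) : ℝ :=
  ∏ j ∈ Finset.univ.erase i, if ω j then 1 - pw j else pw j

theorem pOmega_eq_pHat (i : ι) (ω : ι → Bool) :
    pOmega pw ω = (if ω i then 1 - pw i else pw i) * pHat pw i ω :=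
  (Finset.mul_prod_erase Finset.univ _ (Finset.mem_univ i)).symm

theorem pHat_update (i : ι) (ω : ι → Bool) (b : Bool) :
    pHat pw i (Function.update ω i b) = pHat pw i ω := by
  refine Finset.prod_congr rfl fun j hj => ?_
  rw [Function.update_of_ne (Finset.mem_erase.mp hj).1]

theorem sum_split (i : ι) (b : Bool) (F : (ι → Bool) → ℝ) :
    ∑ ω ∈ Finset.univ.filter (fun ω => ω i = b), pOmega pw ω * F ω
      = (if b then 1 - pw i else pw i) *
        ∑ ω ∈ Finset.univ.filter (fun ω => ω i = true),
          pHat pw i ω * F (Function.update ω i b) := by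
  rw [Finset.mul_sum]
  refine Finset.sum_bij' (fun ω _ => Function.update ω i true)
    (fun ω _ => Function.update ω i b) ?_ ?_ ?_ ?_ ?_
  · intro ω hω; simp
  · intro ω hω; simp
  · intro ω hω
    simp only [Finset.mem_filter] at hω
    show Function.update (Function.update ω i true) i b = ω
    rw [Function.update_idem, ← hω.2, Function.update_eq_self]
  · intro ω hω
    simp only [Finset.mem_filter] at hω
    show Function.update (Function.update ω i b) i true = ω
    rw [Function.update_idem, ← hω.2, Function.update_eq_self]
  · intro ω hω
    simp only [Finset.mem_filter] at hω
    show pOmega pw ω * F ω = (if b = true then 1 - pw i else pw i) *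
      (pHat pw i (Function.update ω i true) * F (Function.update (Function.update ω i true) i b))
    rw [Function.update_idem, pHat_update]
    have hup : Function.update ω i b = ω := by rw [← hω.2]; exact Function.update_eq_self i ω
    rw [hup, pOmega_eq_pHat pw i ω, hω.2]
    ring

theorem sum_invariant (i : ι) (F : (ι → Bool) → ℝ)
    (hF : ∀ ω b, F (Function.update ω i b) = F ω) :
    ∑ ω : ι → Bool, pOmega pw ω * F ω
      = ∑ ω ∈ Finset.univ.filter (fun ω => ω i = true), pHat pw i ω * F ω := by
  rw [← Finset.sum_filter_add_sum_filter_not Finset.univ (fun ω => ω i = true)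
    (fun ω => pOmega pw ω * F ω)]
  have hneg : (Finset.univ.filter fun ω : ι → Bool => ¬ ω i = true)
      = Finset.univ.filter (fun ω => ω i = false) := by
    apply Finset.filter_congr; intro ω _; simp
  rw [hneg, sum_split pw i true F, sum_split pw i false F]
  norm_num
  have h1 : ∀ ω ∈ Finset.univ.filter (fun ω : ι → Bool => ω i = true),
      pHat pw i ω * F (Function.update ω i true) = pHat pw i ω * F ω := by
    intro ω _; rw [hF]
  have h2 : ∀ ω ∈ Finset.univ.filter (fun ω : ι → Bool => ω i = true),
      pHat pw i ω * F (Function.update ω i false) = pHat pw i ω * F ω := by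
    intro ω _; rw [hF]
  rw [Finset.sum_congr rfl h1, Finset.sum_congr rfl h2]
  ring

/-- Expected total cost of a strategy: expected testing cost plus expected value of a
function of the zero set. -/
def totalF (f : Finset ι → ℝ) (T : Strategy ι) : ℝ :=
  ∑ ω : ι → Bool, pOmega pw ω * ((∑ j ∈ T.performed ω, cst j) + f (T.zeroSet ω))

theorem totalF_leaf (f : Finset ι → ℝ) : totalF pw cst f .leaf = f ∅ := by
  unfold totalF
  simp only [Strategy.performed, Strategy.zeroSet, Finset.sum_empty, zero_add]
  rw [← Finset.sum_mul, sum_pOmega_one, one_mul]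

theorem totalF_congr {f g : Finset ι → ℝ} {T : Strategy ι}
    (h : ∀ Z ⊆ T.labels, f Z = g Z) : totalF pw cst f T = totalF pw cst g T := by
  refine Finset.sum_congr rfl fun ω _ => ?_
  rw [h _ (T.zeroSet_subset_labels ω)]

theorem totalF_add_const (a : ℝ) (f : Finset ι → ℝ) (T : Strategy ι) :
    totalF pw cst (fun Z => a + f Z) T = a + totalF pw cst f T := by
  unfold totalF
  have : ∀ ω : ι → Bool, pOmega pw ω * ((∑ j ∈ T.performed ω, cst j) + (a + f (T.zeroSet ω)))
      = pOmega pw ω * a + pOmega pw ω * ((∑ j ∈ T.performed ω, cst j) + f (T.zeroSet ω)) := by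
    intro ω; ring
  rw [Finset.sum_congr rfl fun ω _ => this ω, Finset.sum_add_distrib, ← Finset.sum_mul,
    sum_pOmega_one, one_mul]

theorem totalF_nonneg (hpw : ∀ i, 0 ≤ pw i ∧ pw i ≤ 1) (hcst : ∀ i, 0 ≤ cst i)
    {f : Finset ι → ℝ} (hf : ∀ Z, 0 ≤ f Z) (T : Strategy ι) : 0 ≤ totalF pw cst f T := by
  refine Finset.sum_nonneg fun ω _ => mul_nonneg (pOmega_nonneg pw hpw ω) ?_
  exact add_nonneg (Finset.sum_nonneg fun j _ => hcst j) (hf _)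

theorem totalF_node (hpw : ∀ i, 0 ≤ pw i ∧ pw i ≤ 1) (i : ι) (t0 t1 : Strategy ι)
    (h0 : i ∉ t0.labels) (h1 : i ∉ t1.labels) (f : Finset ι → ℝ) :
    totalF pw cst f (.node i t0 t1)
      = cst i + pw i * totalF pw cst (fun Z => f (insert i Z)) t0
        + (1 - pw i) * totalF pw cst f t1 := by
  set G0 : (ι → Bool) → ℝ :=
    fun ω => cst i + ((∑ j ∈ t0.performed ω, cst j) + f (insert i (t0.zeroSet ω))) with hG0
  set G1 : (ι → Bool) → ℝ :=
    fun ω => cst i + ((∑ j ∈ t1.performed ω, cst j) + f (t1.zeroSet ω)) with hG1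
  have hsum : ∀ a : ℝ, ∀ g : Finset ι → ℝ, ∀ t : Strategy ι,
      ∑ ω : ι → Bool, pOmega pw ω * (a + ((∑ j ∈ t.performed ω, cst j) + g (t.zeroSet ω)))
        = a + totalF pw cst g t := by
    intro a g t
    unfold totalF
    rw [Finset.sum_congr rfl fun ω _ => (by ring :
      pOmega pw ω * (a + ((∑ j ∈ t.performed ω, cst j) + g (t.zeroSet ω)))
      = pOmega pw ω * a + pOmega pw ω * ((∑ j ∈ t.performed ω, cst j) + g (t.zeroSet ω))),
      Finset.sum_add_distrib, ← Finset.sum_mul, sum_pOmega_one, one_mul]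
  -- main computation
  have key : totalF pw cst f (.node i t0 t1)
      = ∑ ω ∈ Finset.univ.filter (fun ω => ω i = true), pOmega pw ω * G1 ω
        + ∑ ω ∈ Finset.univ.filter (fun ω => ω i = false), pOmega pw ω * G0 ω := by
    unfold totalF
    rw [← Finset.sum_filter_add_sum_filter_not Finset.univ (fun ω => ω i = true)]
    have hneg : (Finset.univ.filter fun ω : ι → Bool => ¬ ω i = true)
        = Finset.univ.filter (fun ω => ω i = false) := by
      apply Finset.filter_congr; intro ω _; simp
    rw [hneg]
    congr 1
    · refine Finset.sum_congr rfl fun ω hω => ?_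
      simp only [Finset.mem_filter] at hω
      simp only [Strategy.performed, Strategy.zeroSet, hω.2, if_true, hG1]
      rw [Finset.sum_insert (fun hmem => h1 (t1.performed_subset_labels ω hmem))]
      ring_nf
    · refine Finset.sum_congr rfl fun ω hω => ?_
      simp only [Finset.mem_filter] at hω
      simp only [Strategy.performed, Strategy.zeroSet, hω.2, if_false, hG0,
        Bool.false_eq_true]
      rw [Finset.sum_insert (fun hmem => h0 (t0.performed_subset_labels ω hmem))]
      ring_nf
  have hinv0 : ∀ ω b, G0 (Function.update ω i b) = G0 ω := by
    intro ω b
    simp only [hG0, Strategy.performed_update t0 h0, Strategy.zeroSet_update t0 h0]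
  have hinv1 : ∀ ω b, G1 (Function.update ω i b) = G1 ω := by
    intro ω b
    simp only [hG1, Strategy.performed_update t1 h1, Strategy.zeroSet_update t1 h1]
  rw [key, sum_split pw i true G1, sum_split pw i false G0]
  norm_num
  have e1 : ∑ ω ∈ Finset.univ.filter (fun ω : ι → Bool => ω i = true),
      pHat pw i ω * G1 (Function.update ω i true)
      = cst i + totalF pw cst f t1 := by
    rw [Finset.sum_congr rfl fun ω _ => by rw [hinv1], ← sum_invariant pw i G1 hinv1]
    exact hsum (cst i) f t1
  have e0 : ∑ ω ∈ Finset.univ.filter (fun ω : ι → Bool => ω i = true),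
      pHat pw i ω * G0 (Function.update ω i false)
      = cst i + totalF pw cst (fun Z => f (insert i Z)) t0 := by
    rw [Finset.sum_congr rfl fun ω _ => by rw [hinv0], ← sum_invariant pw i G0 hinv0]
    exact hsum (cst i) (fun Z => f (insert i Z)) t0
  rw [e1, e0]
  ring

end Prob
section Val

variable {ι : Type*} [Fintype ι] [DecidableEq ι] (pw cst : ι → ℝ)

/-- Set of achievable total costs among strategies with labels in `S`. -/
def stratSet (S : Finset ι) (g : Finset ι → ℝ) : Set ℝ :=
  {x | ∃ U : Strategy ι, U.noRepeat ∧ U.labels ⊆ S ∧ totalF pw cst g U = x}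

/-- Optimal (infimal) total cost among strategies with labels in `S`. -/
noncomputable def val (S : Finset ι) (g : Finset ι → ℝ) : ℝ :=
  sInf (stratSet pw cst S g)

theorem stratSet_nonempty (S : Finset ι) (g : Finset ι → ℝ) :
    (stratSet pw cst S g).Nonempty :=
  ⟨_, Strategy.leaf, trivial, by simp [Strategy.labels], rfl⟩

theorem totalF_ge_min (hpw : ∀ i, 0 ≤ pw i ∧ pw i ≤ 1) (hcst : ∀ i, 0 ≤ cst i)
    (S : Finset ι) (g : Finset ι → ℝ) {U : Strategy ι} (hUS : U.labels ⊆ S) :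
    (S.powerset.inf' ⟨∅, by simp⟩ g) ≤ totalF pw cst g U := by
  set M := S.powerset.inf' ⟨∅, by simp⟩ g with hM
  calc M = (∑ ω : ι → Bool, pOmega pw ω) * M := by rw [sum_pOmega_one, one_mul]
    _ = ∑ ω : ι → Bool, pOmega pw ω * M := by rw [Finset.sum_mul]
    _ ≤ totalF pw cst g U := by
        refine Finset.sum_le_sum fun ω _ => ?_
        refine mul_le_mul_of_nonneg_left ?_ (pOmega_nonneg pw hpw ω)
        refine le_add_of_nonneg_of_le (Finset.sum_nonneg fun j _ => hcst j) ?_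
        exact Finset.inf'_le g (Finset.mem_powerset.mpr
          ((U.zeroSet_subset_labels ω).trans hUS))

theorem stratSet_bddBelow (hpw : ∀ i, 0 ≤ pw i ∧ pw i ≤ 1) (hcst : ∀ i, 0 ≤ cst i)
    (S : Finset ι) (g : Finset ι → ℝ) : BddBelow (stratSet pw cst S g) := by
  refine ⟨S.powerset.inf' ⟨∅, by simp⟩ g, ?_⟩
  rintro x ⟨U, _, hUS, rfl⟩
  exact totalF_ge_min pw cst hpw hcst S g hUS

theorem val_le (hpw : ∀ i, 0 ≤ pw i ∧ pw i ≤ 1) (hcst : ∀ i, 0 ≤ cst i)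
    (S : Finset ι) (g : Finset ι → ℝ) {U : Strategy ι} (hU : U.noRepeat)
    (hUS : U.labels ⊆ S) : val pw cst S g ≤ totalF pw cst g U :=
  csInf_le (stratSet_bddBelow pw cst hpw hcst S g) ⟨U, hU, hUS, rfl⟩

theorem le_val (S : Finset ι) (g : Finset ι → ℝ) {a : ℝ}
    (h : ∀ U : Strategy ι, U.noRepeat → U.labels ⊆ S → a ≤ totalF pw cst g U) :
    a ≤ val pw cst S g := by
  refine le_csInf (stratSet_nonempty pw cst S g) ?_
  rintro x ⟨U, hU, hUS, rfl⟩
  exact h U hU hUS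

theorem val_node_le (hpw : ∀ i, 0 ≤ pw i ∧ pw i ≤ 1) (hcst : ∀ i, 0 ≤ cst i)
    (S : Finset ι) (g : Finset ι → ℝ) {i : ι} (hi : i ∈ S) :
    val pw cst S g ≤ cst i + pw i * val pw cst (S.erase i) (fun Z => g (insert i Z))
      + (1 - pw i) * val pw cst (S.erase i) g := by
  refine le_of_forall_pos_le_add fun ε hε => ?_
  obtain ⟨x0, ⟨U0, hU0, hU0S, rfl⟩, hx0⟩ :=
    Real.lt_sInf_add_pos (stratSet_nonempty pw cst (S.erase i) fun Z => g (insert i Z)) hε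
  obtain ⟨x1, ⟨U1, hU1, hU1S, rfl⟩, hx1⟩ :=
    Real.lt_sInf_add_pos (stratSet_nonempty pw cst (S.erase i) g) hε
  have hi0 : i ∉ U0.labels := fun h => (Finset.mem_erase.mp (hU0S h)).1 rfl
  have hi1 : i ∉ U1.labels := fun h => (Finset.mem_erase.mp (hU1S h)).1 rfl
  have hT : (Strategy.node i U0 U1).noRepeat := by
    refine ⟨Finset.notMem_empty i, ?_, ?_⟩
    · exact Strategy.noRepeatFrom_of_disjoint hU0 (by intro j hj; simp at hj; simp [hj, hi0])
    · exact Strategy.noRepeatFrom_of_disjoint hU1 (by intro j hj; simp at hj; simp [hj, hi1])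
  have hTS : (Strategy.node i U0 U1).labels ⊆ S := by
    simp only [Strategy.labels]
    refine Finset.insert_subset hi (Finset.union_subset ?_ ?_)
    · exact hU0S.trans (Finset.erase_subset _ _)
    · exact hU1S.trans (Finset.erase_subset _ _)
  have step := val_le pw cst hpw hcst S g hT hTS
  rw [totalF_node pw cst hpw i U0 U1 hi0 hi1 g] at step
  have h0 : pw i * totalF pw cst (fun Z => g (insert i Z)) U0
      ≤ pw i * (val pw cst (S.erase i) (fun Z => g (insert i Z)) + ε) :=
    mul_le_mul_of_nonneg_left (le_of_lt hx0) (hpw i).1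
  have h1 : (1 - pw i) * totalF pw cst g U1
      ≤ (1 - pw i) * (val pw cst (S.erase i) g + ε) :=
    mul_le_mul_of_nonneg_left (le_of_lt hx1) (by linarith [(hpw i).2])
  have expand : pw i * (val pw cst (S.erase i) (fun Z => g (insert i Z)) + ε)
      + (1 - pw i) * (val pw cst (S.erase i) g + ε)
      = pw i * val pw cst (S.erase i) (fun Z => g (insert i Z))
        + (1 - pw i) * val pw cst (S.erase i) g + ε := by ring
  linarith

theorem split_lemma (hpw : ∀ i, 0 ≤ pw i ∧ pw i ≤ 1) (hcst : ∀ i, 0 ≤ cst i)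
    (S₁ S₂ : Finset ι) (hd : Disjoint S₁ S₂) (T : Strategy ι) :
    ∀ (used : Finset ι) (g₁ g₂ : Finset ι → ℝ), T.noRepeatFrom used →
      T.labels ⊆ S₁ ∪ S₂ →
      val pw cst (S₁ \ used) g₁ + val pw cst (S₂ \ used) g₂
        ≤ totalF pw cst (fun Z => g₁ (Z ∩ S₁) + g₂ (Z ∩ S₂)) T := by
  induction T with
  | leaf =>
      intro used g₁ g₂ _ _
      rw [totalF_leaf, Finset.empty_inter, Finset.empty_inter]
      have e1 : g₁ ∅ = totalF pw cst g₁ Strategy.leaf := (totalF_leaf pw cst g₁).symm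
      have e2 : g₂ ∅ = totalF pw cst g₂ Strategy.leaf := (totalF_leaf pw cst g₂).symm
      rw [e1, e2]
      exact add_le_add
        (val_le pw cst hpw hcst _ _ trivial (by simp [Strategy.labels]))
        (val_le pw cst hpw hcst _ _ trivial (by simp [Strategy.labels]))
  | node i t0 t1 ih0 ih1 =>
      intro used g₁ g₂ hnr hlab
      obtain ⟨hiu, h0, h1⟩ := hnr
      have hil : i ∈ (Strategy.node i t0 t1).labels := by simp [Strategy.labels]
      have hi12 : i ∈ S₁ ∪ S₂ := hlab hil
      have hl0 : t0.labels ⊆ S₁ ∪ S₂ := fun j hj => hlab (by simp [Strategy.labels, hj])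
      have hl1 : t1.labels ⊆ S₁ ∪ S₂ := fun j hj => hlab (by simp [Strategy.labels, hj])
      have hi0 : i ∉ t0.labels :=
        Strategy.not_mem_labels_of_noRepeatFrom t0 h0 i (Finset.mem_insert_self i used)
      have hi1 : i ∉ t1.labels :=
        Strategy.not_mem_labels_of_noRepeatFrom t1 h1 i (Finset.mem_insert_self i used)
      rw [totalF_node pw cst hpw i t0 t1 hi0 hi1]
      rcases Finset.mem_union.mp hi12 with hiS | hiS
      · -- i ∈ S₁
        have hiS2 : i ∉ S₂ := Finset.disjoint_left.mp hd hiS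
        have hfun : (fun Z => g₁ (insert i Z ∩ S₁) + g₂ (insert i Z ∩ S₂))
            = fun Z => (fun W => g₁ (insert i W)) (Z ∩ S₁) + g₂ (Z ∩ S₂) := by
          funext Z
          rw [Finset.insert_inter_of_mem hiS, Finset.insert_inter_of_notMem hiS2]
        have IH0 := ih0 (insert i used) (fun W => g₁ (insert i W)) g₂ h0 hl0
        have IH1 := ih1 (insert i used) g₁ g₂ h1 hl1
        have e1 : S₁ \ insert i used = (S₁ \ used).erase i := by
          ext j; simp [Finset.mem_sdiff, Finset.mem_erase, Finset.mem_insert]; tauto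
        have e2 : S₂ \ insert i used = S₂ \ used := by
          ext j
          simp only [Finset.mem_sdiff, Finset.mem_insert]
          constructor
          · rintro ⟨hj, h'⟩; exact ⟨hj, fun h => h' (Or.inr h)⟩
          · rintro ⟨hj, h'⟩; exact ⟨hj, fun h => h.elim (fun he => hiS2 (he ▸ hj)) h'⟩
        rw [e1, e2] at IH0 IH1
        have vstep := val_node_le pw cst hpw hcst (S₁ \ used) g₁
          (i := i) (Finset.mem_sdiff.mpr ⟨hiS, hiu⟩)
        have hfun' : totalF pw cst (fun Z => g₁ (insert i Z ∩ S₁) + g₂ (insert i Z ∩ S₂)) t0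
            = totalF pw cst (fun Z => (fun W => g₁ (insert i W)) (Z ∩ S₁) + g₂ (Z ∩ S₂)) t0 := by
          rw [hfun]
        have m0 : pw i * ((fun W => g₁ (insert i W)) |> fun gg =>
            val pw cst ((S₁ \ used).erase i) gg + val pw cst (S₂ \ used) g₂)
            ≤ pw i * totalF pw cst (fun Z => g₁ (insert i Z ∩ S₁) + g₂ (insert i Z ∩ S₂)) t0 := by
          rw [hfun']
          exact mul_le_mul_of_nonneg_left IH0 (hpw i).1
        have m1 : (1 - pw i) * (val pw cst ((S₁ \ used).erase i) g₁ + val pw cst (S₂ \ used) g₂)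
            ≤ (1 - pw i) * totalF pw cst (fun Z => g₁ (Z ∩ S₁) + g₂ (Z ∩ S₂)) t1 :=
          mul_le_mul_of_nonneg_left IH1 (by linarith [(hpw i).2])
        simp only at m0
        have expand1 : pw i * (val pw cst ((S₁ \ used).erase i) (fun W => g₁ (insert i W))
            + val pw cst (S₂ \ used) g₂)
            = pw i * val pw cst ((S₁ \ used).erase i) (fun W => g₁ (insert i W))
              + pw i * val pw cst (S₂ \ used) g₂ := by ring
        have expand2 : (1 - pw i) * (val pw cst ((S₁ \ used).erase i) g₁
            + val pw cst (S₂ \ used) g₂)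
            = (1 - pw i) * val pw cst ((S₁ \ used).erase i) g₁
              + (1 - pw i) * val pw cst (S₂ \ used) g₂ := by ring
        have expand3 : pw i * val pw cst (S₂ \ used) g₂
            + (1 - pw i) * val pw cst (S₂ \ used) g₂ = val pw cst (S₂ \ used) g₂ := by ring
        linarith
      · -- i ∈ S₂
        have hiS1 : i ∉ S₁ := Finset.disjoint_right.mp hd hiS
        have hfun : (fun Z => g₁ (insert i Z ∩ S₁) + g₂ (insert i Z ∩ S₂))
            = fun Z => g₁ (Z ∩ S₁) + (fun W => g₂ (insert i W)) (Z ∩ S₂) := by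
          funext Z
          rw [Finset.insert_inter_of_mem hiS, Finset.insert_inter_of_notMem hiS1]
        have IH0 := ih0 (insert i used) g₁ (fun W => g₂ (insert i W)) h0 hl0
        have IH1 := ih1 (insert i used) g₁ g₂ h1 hl1
        have e1 : S₂ \ insert i used = (S₂ \ used).erase i := by
          ext j; simp [Finset.mem_sdiff, Finset.mem_erase, Finset.mem_insert]; tauto
        have e2 : S₁ \ insert i used = S₁ \ used := by
          ext j
          simp only [Finset.mem_sdiff, Finset.mem_insert]
          constructor
          · rintro ⟨hj, h'⟩; exact ⟨hj, fun h => h' (Or.inr h)⟩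
          · rintro ⟨hj, h'⟩; exact ⟨hj, fun h => h.elim (fun he => hiS1 (he ▸ hj)) h'⟩
        rw [e1, e2] at IH0 IH1
        have vstep := val_node_le pw cst hpw hcst (S₂ \ used) g₂
          (i := i) (Finset.mem_sdiff.mpr ⟨hiS, hiu⟩)
        have hfun' : totalF pw cst (fun Z => g₁ (insert i Z ∩ S₁) + g₂ (insert i Z ∩ S₂)) t0
            = totalF pw cst (fun Z => g₁ (Z ∩ S₁) + (fun W => g₂ (insert i W)) (Z ∩ S₂)) t0 := by
          rw [hfun]
        have m0 : pw i * (val pw cst (S₁ \ used) g₁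
            + val pw cst ((S₂ \ used).erase i) (fun W => g₂ (insert i W)))
            ≤ pw i * totalF pw cst (fun Z => g₁ (insert i Z ∩ S₁) + g₂ (insert i Z ∩ S₂)) t0 := by
          rw [hfun']
          exact mul_le_mul_of_nonneg_left IH0 (hpw i).1
        have m1 : (1 - pw i) * (val pw cst (S₁ \ used) g₁
            + val pw cst ((S₂ \ used).erase i) g₂)
            ≤ (1 - pw i) * totalF pw cst (fun Z => g₁ (Z ∩ S₁) + g₂ (Z ∩ S₂)) t1 :=
          mul_le_mul_of_nonneg_left IH1 (by linarith [(hpw i).2])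
        have expand1 : pw i * (val pw cst (S₁ \ used) g₁
            + val pw cst ((S₂ \ used).erase i) (fun W => g₂ (insert i W)))
            = pw i * val pw cst (S₁ \ used) g₁
              + pw i * val pw cst ((S₂ \ used).erase i) (fun W => g₂ (insert i W)) := by ring
        have expand2 : (1 - pw i) * (val pw cst (S₁ \ used) g₁
            + val pw cst ((S₂ \ used).erase i) g₂)
            = (1 - pw i) * val pw cst (S₁ \ used) g₁
              + (1 - pw i) * val pw cst ((S₂ \ used).erase i) g₂ := by ring
        have expand3 : pw i * val pw cst (S₁ \ used) g₁
            + (1 - pw i) * val pw cst (S₁ \ used) g₁ = val pw cst (S₁ \ used) g₁ := by ring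
        linarith

end Val
section UnionL

variable {ι : Type*} [DecidableEq ι]

/-- Union of a list of finsets. -/
def unionL (L : List (Finset ι)) : Finset ι := L.foldr (· ∪ ·) ∅

theorem mem_unionL {L : List (Finset ι)} {j : ι} :
    j ∈ unionL L ↔ ∃ s ∈ L, j ∈ s := by
  induction L with
  | nil => simp [unionL]
  | cons a L ih => simp [unionL, List.foldr] at ih ⊢; rw [ih]

theorem subset_unionL {L : List (Finset ι)} {s : Finset ι} (h : s ∈ L) :
    s ⊆ unionL L := fun j hj => mem_unionL.mpr ⟨s, h, hj⟩

end UnionL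

section Multi

variable {ι : Type*} [Fintype ι] [DecidableEq ι] (pw cst : ι → ℝ)

/-- Multi-group splitting: the cost of any strategy whose labels lie in a disjoint
union of groups is at least the sum of the groups' optimal costs. -/
theorem multiSplit (hpw : ∀ i, 0 ≤ pw i ∧ pw i ≤ 1) (hcst : ∀ i, 0 ≤ cst i) :
    ∀ (L : List (Finset ι × (Finset ι → ℝ))),
      L.Pairwise (fun a b => Disjoint a.1 b.1) →
      ∀ T : Strategy ι, T.noRepeat → T.labels ⊆ unionL (L.map Prod.fst) →
      (L.map fun a => val pw cst a.1 a.2).sum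
        ≤ totalF pw cst (fun Z => (L.map fun a => a.2 (Z ∩ a.1)).sum) T := by
  intro L
  induction L with
  | nil =>
      intro _ T _ _
      simp only [List.map_nil, List.sum_nil]
      exact totalF_nonneg pw cst hpw hcst (fun Z => le_refl 0) T
  | cons a L ih =>
      intro hpair T hT hTlab
      have hpairL : L.Pairwise (fun a b => Disjoint a.1 b.1) := hpair.of_cons
      have hdisj : ∀ b ∈ L, Disjoint a.1 b.1 := fun b hb =>
        (List.pairwise_cons.mp hpair).1 b hb
      have hd : Disjoint a.1 (unionL (L.map Prod.fst)) := by
        rw [Finset.disjoint_right]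
        intro j hj hja
        obtain ⟨s, hs, hjs⟩ := mem_unionL.mp hj
        obtain ⟨b, hb, rfl⟩ := List.mem_map.mp hs
        exact Finset.disjoint_left.mp (hdisj b hb) hja hjs
      have hTlab' : T.labels ⊆ a.1 ∪ unionL (L.map Prod.fst) := by
        intro j hj
        have := hTlab hj
        simp only [List.map_cons] at this
        rw [unionL, List.foldr_cons] at this
        exact this
      set g₂ : Finset ι → ℝ := fun W => (L.map fun b => b.2 (W ∩ b.1)).sum with hg₂
      have hsplit := split_lemma pw cst hpw hcst a.1 (unionL (L.map Prod.fst)) hd T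
        ∅ a.2 g₂ hT hTlab'
      rw [Finset.sdiff_empty, Finset.sdiff_empty] at hsplit
      have hfun : (fun Z => a.2 (Z ∩ a.1) + g₂ (Z ∩ unionL (L.map Prod.fst)))
          = fun Z => ((a :: L).map fun b => b.2 (Z ∩ b.1)).sum := by
        funext Z
        simp only [hg₂, List.map_cons, List.sum_cons]
        congr 1
        refine congrArg List.sum (List.map_congr_left fun b hb => congrArg _ ?_)
        rw [Finset.inter_assoc]
        congr 1
        exact Finset.inter_eq_right.mpr (subset_unionL (List.mem_map_of_mem (f := Prod.fst) hb))
      rw [hfun] at hsplit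
      refine le_trans ?_ hsplit
      simp only [List.map_cons, List.sum_cons]
      refine add_le_add le_rfl ?_
      refine le_val pw cst _ _ ?_
      intro U hU hUS
      exact ih hpairL U hU hUS

/-- Cost of a strategy with labels in `S` followed by one with labels outside `S`. -/
theorem totalF_append (hpw : ∀ i, 0 ≤ pw i ∧ pw i ≤ 1) (S : Finset ι) :
    ∀ (A : Strategy ι), A.noRepeat → A.labels ⊆ S →
    ∀ (B : Strategy ι), (∀ j ∈ B.labels, j ∉ S) →
    ∀ f g : Finset ι → ℝ,
    totalF pw cst (fun Z => f (Z ∩ S) + g (Z \ S)) (A.append B)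
      = totalF pw cst (fun Z => f (Z ∩ S)) A + totalF pw cst (fun Z => g (Z \ S)) B := by
  intro A
  induction A with
  | leaf =>
      intro _ _ B hB f g
      show totalF pw cst (fun Z => f (Z ∩ S) + g (Z \ S)) B = _
      rw [totalF_leaf, Finset.empty_inter]
      have : totalF pw cst (fun Z => f (Z ∩ S) + g (Z \ S)) B
          = totalF pw cst (fun Z => f ∅ + g (Z \ S)) B := by
        refine totalF_congr pw cst fun Z hZ => ?_
        congr 1
        congr 1
        rw [Finset.eq_empty_iff_forall_notMem]
        intro j hj
        rcases Finset.mem_inter.mp hj with ⟨hj1, hj2⟩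
        exact hB j (hZ hj1) hj2
      rw [this, totalF_add_const]
  | node i a0 a1 ih0 ih1 =>
      intro hA hAS B hB f g
      obtain ⟨_, h0, h1⟩ := hA
      have hi0 : i ∉ a0.labels :=
        Strategy.not_mem_labels_of_noRepeatFrom a0 h0 i (Finset.mem_insert_self i ∅)
      have hi1 : i ∉ a1.labels :=
        Strategy.not_mem_labels_of_noRepeatFrom a1 h1 i (Finset.mem_insert_self i ∅)
      have hnr0 : a0.noRepeat := Strategy.noRepeatFrom_anti a0 (Finset.empty_subset _) h0
      have hnr1 : a1.noRepeat := Strategy.noRepeatFrom_anti a1 (Finset.empty_subset _) h1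
      have hiS : i ∈ S := hAS (by simp [Strategy.labels])
      have hiB : i ∉ B.labels := fun h => hB i h hiS
      have hl0 : a0.labels ⊆ S := fun j hj => hAS (by simp [Strategy.labels, hj])
      have hl1 : a1.labels ⊆ S := fun j hj => hAS (by simp [Strategy.labels, hj])
      show totalF pw cst _ (Strategy.node i (a0.append B) (a1.append B)) = _
      have hiA0B : i ∉ (a0.append B).labels := by
        rw [Strategy.labels_append]; simp [hi0, hiB]
      have hiA1B : i ∉ (a1.append B).labels := by
        rw [Strategy.labels_append]; simp [hi1, hiB]
      rw [totalF_node pw cst hpw i _ _ hiA0B hiA1B]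
      rw [totalF_node pw cst hpw i a0 a1 hi0 hi1]
      have hfun : (fun Z => f (insert i Z ∩ S) + g (insert i Z \ S))
          = fun Z => (fun W => f (insert i W)) (Z ∩ S) + g (Z \ S) := by
        funext Z
        rw [Finset.insert_inter_of_mem hiS, Finset.insert_sdiff_of_mem _ hiS]
      have hfun2 : (fun Z => f (insert i Z ∩ S)) = fun Z => (fun W => f (insert i W)) (Z ∩ S) := by
        funext Z
        rw [Finset.insert_inter_of_mem hiS]
      rw [hfun, hfun2, ih0 hnr0 hl0 B hB (fun W => f (insert i W)) g,
        ih1 hnr1 hl1 B hB f g]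
      ring

/-- Chain (sequential composition) of a list of strategies. -/
def chainL (L : List (Strategy ι)) : Strategy ι := L.foldr Strategy.append Strategy.leaf

theorem chain_all (hpw : ∀ i, 0 ≤ pw i ∧ pw i ≤ 1) :
    ∀ (L : List (Finset ι × (Finset ι → ℝ) × Strategy ι)),
      L.Pairwise (fun a b => Disjoint a.1 b.1) →
      (∀ a ∈ L, (a.2.2).noRepeat ∧ (a.2.2).labels ⊆ a.1) →
      (chainL (L.map fun a => a.2.2)).noRepeat
      ∧ (chainL (L.map fun a => a.2.2)).labels ⊆ unionL (L.map Prod.fst)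
      ∧ totalF pw cst (fun Z => (L.map fun a => a.2.1 (Z ∩ a.1)).sum)
          (chainL (L.map fun a => a.2.2))
        = (L.map fun a => totalF pw cst a.2.1 a.2.2).sum := by
  intro L
  induction L with
  | nil =>
      intro _ _
      refine ⟨trivial, by simp [chainL, Strategy.labels], ?_⟩
      simp only [List.map_nil, List.sum_nil]
      show totalF pw cst (fun Z => (0:ℝ)) Strategy.leaf = 0
      rw [totalF_leaf]
  | cons a L ih =>
      intro hpair hmem
      obtain ⟨hChain, hClab, hCcost⟩ := ih hpair.of_cons (fun b hb => hmem b (List.mem_cons_of_mem a hb))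
      obtain ⟨hTnr, hTlab⟩ := hmem a List.mem_cons_self
      have hdisj : ∀ b ∈ L, Disjoint a.1 b.1 := fun b hb =>
        (List.pairwise_cons.mp hpair).1 b hb
      have hd : Disjoint a.1 (unionL (L.map Prod.fst)) := by
        rw [Finset.disjoint_right]
        intro j hj hja
        obtain ⟨s, hs, hjs⟩ := mem_unionL.mp hj
        obtain ⟨b, hb, rfl⟩ := List.mem_map.mp hs
        exact Finset.disjoint_left.mp (hdisj b hb) hja hjs
      have hBout : ∀ j ∈ (chainL (L.map fun a => a.2.2)).labels, j ∉ a.1 := by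
        intro j hj
        exact fun hja => Finset.disjoint_left.mp hd hja (hClab hj)
      have hchaineq : chainL ((a :: L).map fun a => a.2.2)
          = (a.2.2).append (chainL (L.map fun a => a.2.2)) := rfl
      have hlab : (chainL ((a :: L).map fun a => a.2.2)).labels
          ⊆ unionL ((a :: L).map Prod.fst) := by
        rw [hchaineq, Strategy.labels_append]
        intro j hj
        have : unionL ((a :: L).map Prod.fst) = a.1 ∪ unionL (L.map Prod.fst) := rfl
        rw [this]
        rcases Finset.mem_union.mp hj with h | h
        · exact Finset.mem_union_left _ (hTlab h)
        · exact Finset.mem_union_right _ (hClab h)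
      have hnr : (chainL ((a :: L).map fun a => a.2.2)).noRepeat := by
        rw [hchaineq]
        refine Strategy.noRepeatFrom_append _ _ hTnr ?_
        refine Strategy.noRepeatFrom_of_disjoint hChain ?_
        intro j hj
        rcases Finset.mem_union.mp hj with h | h
        · exact absurd h (Finset.notMem_empty j)
        · exact fun hl => hBout j hl (hTlab h)
      refine ⟨hnr, hlab, ?_⟩
      -- cost computation
      have hcongr1 : totalF pw cst (fun Z => ((a :: L).map fun b => b.2.1 (Z ∩ b.1)).sum)
          (chainL ((a :: L).map fun b => b.2.2))
          = totalF pw cst (fun Z => a.2.1 (Z ∩ a.1)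
              + (fun W => (L.map fun b => b.2.1 (W ∩ b.1)).sum) (Z \ a.1))
            (chainL ((a :: L).map fun b => b.2.2)) := by
        refine totalF_congr pw cst fun Z hZ => ?_
        simp only [List.map_cons, List.sum_cons]
        congr 1
        refine congrArg List.sum (List.map_congr_left fun b hb => congrArg _ ?_)
        ext j
        simp only [Finset.mem_inter, Finset.mem_sdiff]
        constructor
        · rintro ⟨hj1, hj2⟩
          exact ⟨⟨hj1, fun hja => Finset.disjoint_left.mp (hdisj b hb) hja hj2⟩, hj2⟩
        · rintro ⟨⟨hj1, _⟩, hj2⟩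
          exact ⟨hj1, hj2⟩
      rw [hcongr1, hchaineq,
        totalF_append pw cst hpw a.1 a.2.2 hTnr hTlab _ hBout
          a.2.1 (fun W => (L.map fun b => b.2.1 (W ∩ b.1)).sum)]
      have e1 : totalF pw cst (fun Z => a.2.1 (Z ∩ a.1)) a.2.2 = totalF pw cst a.2.1 a.2.2 := by
        refine totalF_congr pw cst fun Z hZ => ?_
        rw [Finset.inter_eq_left.mpr (hZ.trans hTlab)]
      have e2 : totalF pw cst
            (fun Z => (fun W => (L.map fun b => b.2.1 (W ∩ b.1)).sum) (Z \ a.1))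
            (chainL (L.map fun b => b.2.2))
          = (L.map fun b => totalF pw cst b.2.1 b.2.2).sum := by
        rw [← hCcost]
        refine totalF_congr pw cst fun Z hZ => ?_
        refine congrArg List.sum (List.map_congr_left fun b hb => congrArg _ ?_)
        ext j
        simp only [Finset.mem_inter, Finset.mem_sdiff]
        constructor
        · rintro ⟨⟨hj1, _⟩, hj2⟩; exact ⟨hj1, hj2⟩
        · rintro ⟨hj1, hj2⟩
          exact ⟨⟨hj1, fun hja => Finset.disjoint_left.mp hd hja (hClab (hZ hj1))⟩, hj2⟩
      rw [e1, e2]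
      simp
theorem list_sum_le_sum_map {γ : Type*} (l : List γ) (f g : γ → ℝ)
    (h : ∀ a ∈ l, f a ≤ g a) : (l.map f).sum ≤ (l.map g).sum := by
  apply List.sum_le_sum
  exact h

theorem performed_chainL : ∀ (Ls : List (Strategy ι)) (ω : ι → Bool),
    (chainL Ls).performed ω = unionL (Ls.map fun t => t.performed ω)
  | [], _ => rfl
  | t :: Ls, ω => by
      show (t.append (chainL Ls)).performed ω = _
      rw [Strategy.performed_append, performed_chainL Ls ω]
      rfl

end Multi
section HierarchyLemmas

variable {Y : Type*} [Fintype Y] [DecidableEq Y]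

theorem singleton_mem_attrs (H : Hierarchy Y) (y : Y) : ({y} : Finset Y) ∈ H.attrs := by
  set F := H.attrs.filter (fun A => y ∈ A) with hF
  have hne : F.Nonempty := ⟨Finset.univ, by simp [hF, H.univ_mem]⟩
  obtain ⟨M, hM, hMmin⟩ := F.exists_min_image Finset.card hne
  have hMattrs : M ∈ H.attrs := (Finset.mem_filter.mp hM).1
  have hyM : y ∈ M := (Finset.mem_filter.mp hM).2
  have hinf : F.inf id = M := by
    refine le_antisymm (Finset.inf_le hM) (Finset.le_inf fun A hA => ?_)
    have hAattrs : A ∈ H.attrs := (Finset.mem_filter.mp hA).1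
    have hyA : y ∈ A := (Finset.mem_filter.mp hA).2
    rcases H.nested M hMattrs A hAattrs with h | h | h
    · exact absurd (Finset.mem_inter.mpr ⟨hyM, hyA⟩) (by rw [h]; exact Finset.notMem_empty y)
    · exact h
    · rw [Finset.eq_of_subset_of_card_le h (hMmin A hA)]
      exact le_refl _
  have : ({y} : Finset Y) = M := by
    rw [← H.singleton_inf y]
    exact hinf
  rw [this]; exact hMattrs

/-- The children of `B₀`: the maximal attributes strictly contained in `B₀`. -/
def childrenF (H : Hierarchy Y) (B₀ : Finset Y) : Finset (Finset Y) :=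
  H.attrs.filter (fun C => C ⊂ B₀ ∧ ∀ D ∈ H.attrs, C ⊂ D → ¬ D ⊂ B₀)

theorem child_mem_attrs {H : Hierarchy Y} {B₀ C : Finset Y} (h : C ∈ childrenF H B₀) :
    C ∈ H.attrs := (Finset.mem_filter.mp h).1

theorem child_ssubset {H : Hierarchy Y} {B₀ C : Finset Y} (h : C ∈ childrenF H B₀) :
    C ⊂ B₀ := (Finset.mem_filter.mp h).2.1

theorem child_maximal {H : Hierarchy Y} {B₀ C : Finset Y} (h : C ∈ childrenF H B₀) :
    ∀ D ∈ H.attrs, C ⊂ D → ¬ D ⊂ B₀ := (Finset.mem_filter.mp h).2.2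

theorem exists_child (H : Hierarchy Y) {B₀ A : Finset Y} (hA : A ∈ H.attrs)
    (hsub : A ⊂ B₀) : ∃ C ∈ childrenF H B₀, A ⊆ C := by
  set F := H.attrs.filter (fun D => A ⊆ D ∧ D ⊂ B₀) with hF
  have hne : F.Nonempty := ⟨A, by simp [hF, hA, hsub]⟩
  obtain ⟨M, hM, hMmax⟩ := F.exists_max_image Finset.card hne
  simp only [hF, Finset.mem_filter] at hM
  refine ⟨M, ?_, hM.2.1⟩
  refine Finset.mem_filter.mpr ⟨hM.1, hM.2.2, fun D hD hMD hDB => ?_⟩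
  have hDF : D ∈ F := Finset.mem_filter.mpr ⟨hD, hM.2.1.trans hMD.subset, hDB⟩
  exact absurd (hMmax D hDF) (not_le_of_gt (Finset.card_lt_card hMD))

theorem children_disjoint {H : Hierarchy Y} {B₀ C C' : Finset Y}
    (hC : C ∈ childrenF H B₀) (hC' : C' ∈ childrenF H B₀) (hne : C ≠ C') :
    C ∩ C' = ∅ := by
  rcases H.nested C (child_mem_attrs hC) C' (child_mem_attrs hC') with h | h | h
  · exact h
  · have : C ⊂ C' := Finset.ssubset_iff_subset_ne.mpr ⟨h, hne⟩
    exact absurd (child_ssubset hC') (child_maximal hC C' (child_mem_attrs hC') this)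
  · have : C' ⊂ C := Finset.ssubset_iff_subset_ne.mpr ⟨h, hne.symm⟩
    exact absurd (child_ssubset hC) (child_maximal hC' C (child_mem_attrs hC) this)

theorem children_cover (H : Hierarchy Y) {B₀ : Finset Y} (hcard : 1 < B₀.card)
    {y : Y} (hy : y ∈ B₀) : ∃ C ∈ childrenF H B₀, y ∈ C := by
  have h1 : ({y} : Finset Y) ∈ H.attrs := singleton_mem_attrs H y
  have h2 : ({y} : Finset Y) ⊂ B₀ := by
    refine Finset.ssubset_iff_subset_ne.mpr ⟨Finset.singleton_subset_iff.mpr hy, fun h => ?_⟩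
    rw [← h] at hcard; simp at hcard
  obtain ⟨C, hC, hsub⟩ := exists_child H h1 h2
  exact ⟨C, hC, hsub (Finset.mem_singleton_self y)⟩

theorem mem_subAttrs {H : Hierarchy Y} {B₀ : Finset Y} {i : AttrIdx H} :
    i ∈ subAttrs H B₀ ↔ i.val ⊆ B₀ := by simp [subAttrs]

theorem totalCostOn_eq_totalF (H : Hierarchy Y) (pw cst : AttrIdx H → ℝ) (cstar : ℝ)
    (B₀ : Finset Y) (T : Strategy (AttrIdx H)) :
    totalCostOn H pw cst cstar B₀ T
      = totalF pw cst (fun Z => cstar * (((B₀ \ Z.sup (fun i => i.val)).card : ℕ) : ℝ)) T := by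
  unfold totalCostOn totalF survivorsIn testCost probOf
  have hswap : ∑ i : AttrIdx H, cst i *
        ∑ ω ∈ Finset.univ.filter (fun ω => i ∈ T.performed ω), pOmega pw ω
      = ∑ ω : AttrIdx H → Bool, pOmega pw ω * ∑ j ∈ T.performed ω, cst j := by
    have e1 : ∀ i : AttrIdx H, cst i *
          ∑ ω ∈ Finset.univ.filter (fun ω => i ∈ T.performed ω), pOmega pw ω
        = ∑ ω : AttrIdx H → Bool, (if i ∈ T.performed ω then cst i * pOmega pw ω else 0) := by
      intro i
      rw [Finset.sum_filter, Finset.mul_sum]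
      refine Finset.sum_congr rfl fun ω _ => ?_
      split <;> simp
    rw [Finset.sum_congr rfl fun i _ => e1 i, Finset.sum_comm]
    refine Finset.sum_congr rfl fun ω _ => ?_
    rw [Finset.sum_ite_mem, Finset.univ_inter, Finset.mul_sum]
    refine Finset.sum_congr rfl fun j _ => mul_comm _ _
  rw [hswap, Finset.mul_sum, ← Finset.sum_add_distrib]
  refine Finset.sum_congr rfl fun ω _ => ?_
  ring

/-- Cardinality of a partitioned set difference decomposes along the parts. -/
theorem card_partition {Y : Type*} [DecidableEq Y] :
    ∀ (lC : List (Finset Y)), lC.Pairwise (fun C C' => C ∩ C' = ∅) →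
    ∀ (B : Finset Y), (∀ y, y ∈ B ↔ ∃ C ∈ lC, y ∈ C) → ∀ (X : Finset Y),
    (((B \ X).card : ℕ) : ℝ) = (lC.map (fun C => (((C \ X).card : ℕ) : ℝ))).sum := by
  intro lC
  induction lC with
  | nil =>
      intro _ B hcov X
      have : B = ∅ := Finset.eq_empty_iff_forall_notMem.mpr fun y hy => by
        obtain ⟨C, hC, _⟩ := (hcov y).mp hy
        exact absurd hC List.not_mem_nil
      simp [this]
  | cons C lC' ih =>
      intro hpair B hcov X
      have hpair' := hpair.of_cons
      have hdisj : ∀ C' ∈ lC', C ∩ C' = ∅ := fun C' hC' =>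
        (List.pairwise_cons.mp hpair).1 C' hC'
      set B' := unionL lC' with hB'
      have hcov' : ∀ y, y ∈ B' ↔ ∃ C' ∈ lC', y ∈ C' := fun y => mem_unionL
      have hBeq : B = C ∪ B' := by
        ext y
        rw [Finset.mem_union, hcov y, hcov' y]
        constructor
        · rintro ⟨D, hD, hyD⟩
          rcases List.mem_cons.mp hD with rfl | hD'
          · exact Or.inl hyD
          · exact Or.inr ⟨D, hD', hyD⟩
        · rintro (hyC | ⟨D, hD, hyD⟩)
          · exact ⟨C, List.mem_cons_self, hyC⟩
          · exact ⟨D, List.mem_cons_of_mem C hD, hyD⟩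
      have hCB' : Disjoint (C \ X) (B' \ X) := by
        rw [Finset.disjoint_left]
        intro y hy1 hy2
        obtain ⟨C', hC', hyC'⟩ := (hcov' y).mp (Finset.mem_sdiff.mp hy2).1
        have : y ∈ C ∩ C' := Finset.mem_inter.mpr ⟨(Finset.mem_sdiff.mp hy1).1, hyC'⟩
        rw [hdisj C' hC'] at this
        exact absurd this (Finset.notMem_empty y)
      rw [hBeq, Finset.union_sdiff_distrib, Finset.card_union_of_disjoint hCB',
        List.map_cons, List.sum_cons, ← ih hpair' B' hcov' X]
      push_cast
      ring

end HierarchyLemmas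
section Main

variable {Y : Type*} [Fintype Y] [DecidableEq Y]

/-- The strategy is coarse-to-fine relative to the subhierarchy rooted at `B₀`. -/
def ctfOn (H : Hierarchy Y) (B₀ : Finset Y) (T : Strategy (AttrIdx H)) : Prop :=
  ∀ ω, T.performed ω = (subAttrs H B₀).filter fun i =>
    ∀ j : AttrIdx H, i.val ⊂ j.val → j.val ⊆ B₀ → ω j = true

theorem ssub_sub_false {s t : Finset Y} (hst : s ⊂ t) (hts : t ⊆ s) : False :=
  (Finset.ssubset_iff_subset_ne.mp hst).2
    (Finset.Subset.antisymm (Finset.ssubset_iff_subset_ne.mp hst).1 hts)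

theorem main_ind (H : Hierarchy Y) (β c : Finset Y → ℝ)
    (hβ : ∀ A ∈ H.attrs, 0 < β A ∧ β A ≤ 1) (hc : ∀ A ∈ H.attrs, 0 < c A)
    (cstar : ℝ) (hcstar : 0 < cstar)
    (hCF : ∀ B₀ : Finset Y, ∀ hB : B₀ ∈ H.attrs,
      ∃ t0 t1 : Strategy (AttrIdx H),
        (Strategy.node ⟨B₀, hB⟩ t0 t1).noRepeat
        ∧ (Strategy.node ⟨B₀, hB⟩ t0 t1).labelsIn (subAttrs H B₀)
        ∧ ∀ T' : Strategy (AttrIdx H), T'.noRepeat → T'.labelsIn (subAttrs H B₀) →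
            totalCostOn H (fun i => β i.val) (fun i => c i.val) cstar B₀
                (Strategy.node ⟨B₀, hB⟩ t0 t1)
              ≤ totalCostOn H (fun i => β i.val) (fun i => c i.val) cstar B₀ T') :
    ∀ n : ℕ, ∀ B₀ : Finset Y, ∀ hB : B₀ ∈ H.attrs, B₀.card ≤ n →
      ∃ T : Strategy (AttrIdx H), ctfOn H B₀ T ∧ T.noRepeat ∧ T.labels ⊆ subAttrs H B₀ ∧
        ∀ T' : Strategy (AttrIdx H), T'.noRepeat → T'.labels ⊆ subAttrs H B₀ →
          totalCostOn H (fun i => β i.val) (fun i => c i.val) cstar B₀ T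
            ≤ totalCostOn H (fun i => β i.val) (fun i => c i.val) cstar B₀ T' := by
  intro n
  induction n with
  | zero =>
      intro B₀ hB hcard
      have h1 : 0 < B₀.card := Finset.card_pos.mpr (H.nonempty_of_mem B₀ hB)
      omega
  | succ n ihn =>
      intro B₀ hB hcard
      set pw : AttrIdx H → ℝ := fun i => β i.val with hpwdef
      set cst : AttrIdx H → ℝ := fun i => c i.val with hcstdef
      have hpw : ∀ i : AttrIdx H, 0 ≤ pw i ∧ pw i ≤ 1 := fun i =>
        ⟨(hβ i.val i.2).1.le, (hβ i.val i.2).2⟩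
      have hcst : ∀ i : AttrIdx H, 0 ≤ cst i := fun i => (hc i.val i.2).le
      set root : AttrIdx H := ⟨B₀, hB⟩ with hrootdef
      set fB : Finset (AttrIdx H) → ℝ :=
        fun Z => cstar * (((B₀ \ Z.sup (fun i => i.val)).card : ℕ) : ℝ) with hfBdef
      have hfBnonneg : ∀ Z, 0 ≤ fB Z := fun Z => mul_nonneg hcstar.le (by positivity)
      have hkey : ∀ i : AttrIdx H, i.val ⊆ B₀ → i ≠ root → i.val ⊂ B₀ := by
        intro i hsub hne
        exact Finset.ssubset_iff_subset_ne.mpr ⟨hsub, fun h => hne (Subtype.ext h)⟩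
      have hrootpred : ∀ ω : AttrIdx H → Bool,
          ∀ j : AttrIdx H, root.val ⊂ j.val → j.val ⊆ B₀ → ω j = true := by
        intro ω j hj1 hj2
        exact absurd (ssub_sub_false hj1 hj2) not_false
      by_cases hone : B₀.card ≤ 1
      · -- base case : B₀ is a singleton
        have hsingle : subAttrs H B₀ = {root} := by
          ext i
          rw [mem_subAttrs, Finset.mem_singleton]
          constructor
          · intro hsub
            have h1 : 1 ≤ i.val.card := Finset.card_pos.mpr (H.nonempty_of_mem i.val i.2)
            have h2 : i.val.card ≤ B₀.card := Finset.card_le_card hsub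
            exact Subtype.ext (Finset.eq_of_subset_of_card_le hsub
              (by show B₀.card ≤ i.val.card; omega))
          · rintro rfl
            exact Finset.Subset.refl _
        obtain ⟨t0, t1, hnrS, hlabS, hoptS⟩ := hCF B₀ hB
        have hlabS' := (Strategy.labelsIn_iff _ _).mp hlabS
        obtain ⟨_, h0, h1⟩ := hnrS
        have hroot0 : root ∉ t0.labels :=
          Strategy.not_mem_labels_of_noRepeatFrom t0 h0 root (Finset.mem_insert_self _ _)
        have hroot1 : root ∉ t1.labels :=
          Strategy.not_mem_labels_of_noRepeatFrom t1 h1 root (Finset.mem_insert_self _ _)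
        have hlab0 : t0.labels ⊆ ∅ := by
          intro j hj
          have hjs : j ∈ subAttrs H B₀ := hlabS' (Finset.mem_insert_of_mem (Finset.mem_union_left _ hj))
          rw [hsingle, Finset.mem_singleton] at hjs
          exact absurd hj (by rw [hjs]; exact hroot0)
        have hlab1 : t1.labels ⊆ ∅ := by
          intro j hj
          have hjs : j ∈ subAttrs H B₀ := hlabS' (Finset.mem_insert_of_mem (Finset.mem_union_right _ hj))
          rw [hsingle, Finset.mem_singleton] at hjs
          exact absurd hj (by rw [hjs]; exact hroot1)
        have ht0 : t0 = Strategy.leaf := Strategy.eq_leaf_of_labels_subset_empty hlab0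
        have ht1 : t1 = Strategy.leaf := Strategy.eq_leaf_of_labels_subset_empty hlab1
        subst ht0 ht1
        refine ⟨Strategy.node root Strategy.leaf Strategy.leaf, ?_, ?_, ?_, ?_⟩
        · intro ω
          have hperf : (Strategy.node root Strategy.leaf Strategy.leaf).performed ω
              = {root} := by
            simp [Strategy.performed]
          rw [hperf, hsingle, Finset.filter_singleton, if_pos (hrootpred ω)]
        · exact ⟨Finset.notMem_empty _, trivial, trivial⟩
        · rw [hsingle]
          simp [Strategy.labels]
        · intro T' hnr' hlab'
          exact hoptS T' hnr' ((Strategy.labelsIn_iff T' _).mpr hlab')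
      · -- inductive case : B₀ has at least two patterns
        push_neg at hone
        set 𝒞 := childrenF H B₀ with h𝒞
        have hex : ∀ C : Finset Y, ∃ T : Strategy (AttrIdx H), C ∈ 𝒞 →
            ctfOn H C T ∧ T.noRepeat ∧ T.labels ⊆ subAttrs H C ∧
            ∀ T' : Strategy (AttrIdx H), T'.noRepeat → T'.labels ⊆ subAttrs H C →
              totalCostOn H pw cst cstar C T ≤ totalCostOn H pw cst cstar C T' := by
          intro C
          by_cases hC : C ∈ 𝒞
          · have hCattrs := child_mem_attrs hC
            have h1 := Finset.card_lt_card (child_ssubset hC)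
            obtain ⟨T, hT⟩ := ihn C hCattrs (by omega)
            exact ⟨T, fun _ => hT⟩
          · exact ⟨Strategy.leaf, fun h => absurd h hC⟩
        choose Tf hTf using hex
        set l := 𝒞.toList with hl
        have hmem_l : ∀ C, C ∈ l ↔ C ∈ 𝒞 := fun C => Finset.mem_toList
        set L : List (Finset (AttrIdx H) × (Finset (AttrIdx H) → ℝ) × Strategy (AttrIdx H)) :=
          l.map (fun C => (subAttrs H C,
            fun Z => cstar * (((C \ Z.sup (fun i => i.val)).card : ℕ) : ℝ), Tf C)) with hL
        have hgroups_disj : ∀ C ∈ 𝒞, ∀ C' ∈ 𝒞, C ≠ C' →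
            Disjoint (subAttrs H C) (subAttrs H C') := by
          intro C hC C' hC' hne
          rw [Finset.disjoint_left]
          intro i hiC hiC'
          rw [mem_subAttrs] at hiC hiC'
          obtain ⟨y, hy⟩ := H.nonempty_of_mem i.val i.2
          have hmem : y ∈ C ∩ C' := Finset.mem_inter.mpr ⟨hiC hy, hiC' hy⟩
          rw [children_disjoint hC hC' hne] at hmem
          exact absurd hmem (Finset.notMem_empty y)
        have hLpair : L.Pairwise (fun a b => Disjoint a.1 b.1) := by
          rw [hL, List.pairwise_map]
          refine List.Pairwise.imp_of_mem ?_ (Finset.nodup_toList 𝒞)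
          intro C C' hC hC' hne
          exact hgroups_disj C ((hmem_l C).mp hC) C' ((hmem_l C').mp hC') hne
        have hLmem : ∀ a ∈ L, (a.2.2).noRepeat ∧ (a.2.2).labels ⊆ a.1 := by
          rw [hL]
          intro a ha
          obtain ⟨C, hC, rfl⟩ := List.mem_map.mp ha
          have h := hTf C ((hmem_l C).mp hC)
          exact ⟨h.2.1, h.2.2.1⟩
        obtain ⟨hchain_nr, hchain_lab, hchain_cost⟩ := chain_all pw cst hpw L hLpair hLmem
        set chain := chainL (L.map fun a => a.2.2) with hchain
        have hUfst : ∀ j : AttrIdx H, j ∈ unionL (L.map Prod.fst) ↔ ∃ C ∈ 𝒞, j.val ⊆ C := by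
          intro j
          rw [mem_unionL]
          constructor
          · rintro ⟨s, hs, hjs⟩
            obtain ⟨a, ha, rfl⟩ := List.mem_map.mp hs
            rw [hL] at ha
            obtain ⟨C, hC, rfl⟩ := List.mem_map.mp ha
            exact ⟨C, (hmem_l C).mp hC, mem_subAttrs.mp hjs⟩
          · rintro ⟨C, hC, hsub⟩
            refine ⟨subAttrs H C, ?_, mem_subAttrs.mpr hsub⟩
            rw [hL, List.map_map]
            exact List.mem_map.mpr ⟨C, (hmem_l C).mpr hC, rfl⟩
        have hUsub : ∀ j : AttrIdx H, j ∈ unionL (L.map Prod.fst) →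
            j.val ⊆ B₀ ∧ j ≠ root := by
          intro j hj
          obtain ⟨C, hC, hsub⟩ := (hUfst j).mp hj
          have hCB := child_ssubset hC
          refine ⟨hsub.trans hCB.subset, fun he => ?_⟩
          have hBC : B₀ ⊆ C := by
            have : j.val = B₀ := by rw [he]
            rwa [this] at hsub
          exact ssub_sub_false hCB hBC
        have hUmem : ∀ j : AttrIdx H, j.val ⊆ B₀ → j ≠ root →
            j ∈ unionL (L.map Prod.fst) := by
          intro j hsub hne
          obtain ⟨C, hC, hsubC⟩ := exists_child H j.2 (hkey j hsub hne)
          exact (hUfst j).mpr ⟨C, hC, hsubC⟩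
        have hroot_chain : root ∉ chain.labels := fun h => (hUsub root (hchain_lab h)).2 rfl
        set T := Strategy.node root Strategy.leaf chain with hT
        have hTnr : T.noRepeat := by
          refine ⟨Finset.notMem_empty _, trivial, ?_⟩
          refine Strategy.noRepeatFrom_of_disjoint hchain_nr ?_
          intro j hj
          have : j = root := by simpa using hj
          rw [this]
          exact hroot_chain
        have hTlab : T.labels ⊆ subAttrs H B₀ := by
          rw [hT]
          simp only [Strategy.labels, Finset.empty_union]
          refine Finset.insert_subset (mem_subAttrs.mpr (Finset.Subset.refl B₀)) ?_
          intro j hj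
          exact mem_subAttrs.mpr (hUsub j (hchain_lab hj)).1
        -- characterization of the tests performed by the chain
        have hperfchain : ∀ (ω : AttrIdx H → Bool) (i : AttrIdx H),
            i ∈ chain.performed ω ↔ ∃ C ∈ 𝒞, i ∈ (Tf C).performed ω := by
          intro ω i
          rw [hchain, performed_chainL, mem_unionL]
          constructor
          · rintro ⟨s, hs, hjs⟩
            obtain ⟨t, ht, rfl⟩ := List.mem_map.mp hs
            obtain ⟨a, ha, rfl⟩ := List.mem_map.mp ht
            rw [hL] at ha
            obtain ⟨C, hC, rfl⟩ := List.mem_map.mp ha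
            exact ⟨C, (hmem_l C).mp hC, hjs⟩
          · rintro ⟨C, hC, hi⟩
            refine ⟨(Tf C).performed ω, ?_, hi⟩
            rw [hL, List.map_map, List.map_map]
            exact List.mem_map.mpr ⟨C, (hmem_l C).mpr hC, rfl⟩
        -- coarse-to-fine property
        have hctf : ctfOn H B₀ T := by
          intro ω
          rcases hr : ω root with _ | _
          · -- root test is negative
            have hperf : T.performed ω = {root} := by
              rw [hT]
              simp [Strategy.performed, hr]
            rw [hperf]
            ext i
            rw [Finset.mem_singleton, Finset.mem_filter, mem_subAttrs]
            constructor
            · rintro rfl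
              exact ⟨Finset.Subset.refl _, hrootpred ω⟩
            · rintro ⟨hsub, hpred⟩
              by_contra hne
              have hss : i.val ⊂ B₀ := hkey i hsub hne
              have := hpred root hss (Finset.Subset.refl B₀)
              rw [hr] at this
              exact Bool.false_ne_true this
          · -- root test is positive
            have hperf : T.performed ω = insert root (chain.performed ω) := by
              rw [hT]
              simp [Strategy.performed, hr]
            rw [hperf]
            ext i
            rw [Finset.mem_insert, Finset.mem_filter, mem_subAttrs]
            constructor
            · rintro (rfl | hi)
              · exact ⟨Finset.Subset.refl _, hrootpred ω⟩
              · obtain ⟨C, hC, hiC⟩ := (hperfchain ω i).mp hi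
                rw [(hTf C hC).1 ω, Finset.mem_filter, mem_subAttrs] at hiC
                obtain ⟨hisub, hipred⟩ := hiC
                have hCB := child_ssubset hC
                refine ⟨hisub.trans hCB.subset, ?_⟩
                intro j hij hjB
                by_cases hj : j = root
                · rw [hj]; exact hr
                · have hjss : j.val ⊂ B₀ := hkey j hjB hj
                  obtain ⟨y, hy⟩ := H.nonempty_of_mem i.val i.2
                  rcases H.nested j.val j.2 C (child_mem_attrs hC) with hcase | hcase | hcase
                  · have : y ∈ j.val ∩ C :=
                      Finset.mem_inter.mpr ⟨hij.subset hy, hisub hy⟩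
                    rw [hcase] at this
                    exact absurd this (Finset.notMem_empty y)
                  · exact hipred j hij hcase
                  · by_cases he : C = j.val
                    · exact hipred j hij (by rw [← he])
                    · have hss : C ⊂ j.val := Finset.ssubset_iff_subset_ne.mpr ⟨hcase, he⟩
                      exact absurd hjss (child_maximal hC j.val j.2 hss)
            · rintro ⟨hsub, hpred⟩
              by_cases hne : i = root
              · exact Or.inl hne
              · refine Or.inr ?_
                obtain ⟨C, hC, hsubC⟩ := exists_child H i.2 (hkey i hsub hne)
                refine (hperfchain ω i).mpr ⟨C, hC, ?_⟩
                rw [(hTf C hC).1 ω, Finset.mem_filter, mem_subAttrs]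
                refine ⟨hsubC, fun j hij hjC => ?_⟩
                exact hpred j hij (hjC.trans (child_ssubset hC).subset)
        -- decomposition of the survivor count
        have hlpairY : l.Pairwise (fun C C' => C ∩ C' = ∅) := by
          refine List.Pairwise.imp_of_mem ?_ (Finset.nodup_toList 𝒞)
          intro C C' hC hC' hne
          exact children_disjoint ((hmem_l C).mp hC) ((hmem_l C').mp hC') hne
        have hlcover : ∀ y, y ∈ B₀ ↔ ∃ C ∈ l, y ∈ C := by
          intro y
          constructor
          · intro hy
            obtain ⟨C, hC, hyC⟩ := children_cover H hone hy
            exact ⟨C, (hmem_l C).mpr hC, hyC⟩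
          · rintro ⟨C, hC, hyC⟩
            exact (child_ssubset ((hmem_l C).mp hC)).subset hyC
        have hdecomp : ∀ Z : Finset (AttrIdx H), Z ⊆ unionL (L.map Prod.fst) →
            fB Z = (L.map fun a => a.2.1 (Z ∩ a.1)).sum := by
          intro Z hZ
          have hcard := card_partition l hlpairY B₀ hlcover (Z.sup (fun i => i.val))
          have hperC : ∀ C ∈ 𝒞, C \ Z.sup (fun i => i.val)
              = C \ (Z ∩ subAttrs H C).sup (fun i => i.val) := by
            intro C hC
            ext y
            simp only [Finset.mem_sdiff]
            constructor
            · rintro ⟨hyC, hns⟩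
              refine ⟨hyC, fun hmem => hns ?_⟩
              have hsup : (Z ∩ subAttrs H C).sup (fun i : AttrIdx H => i.val)
                  ⊆ Z.sup (fun i : AttrIdx H => i.val) :=
                Finset.sup_mono Finset.inter_subset_left
              exact hsup hmem
            · rintro ⟨hyC, hns⟩
              refine ⟨hyC, fun hmem => ?_⟩
              obtain ⟨i, hiZ, hyi⟩ := Finset.mem_sup.mp hmem
              obtain ⟨C', hC', hsubC'⟩ := (hUfst i).mp (hZ hiZ)
              by_cases he : C' = C
              · refine hns (Finset.mem_sup.mpr ⟨i, ?_, hyi⟩)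
                exact Finset.mem_inter.mpr ⟨hiZ, mem_subAttrs.mpr (he ▸ hsubC')⟩
              · have hyC' : y ∈ C' := hsubC' hyi
                have : y ∈ C ∩ C' := Finset.mem_inter.mpr ⟨hyC, hyC'⟩
                rw [children_disjoint hC hC' (fun h => he h.symm)] at this
                exact absurd this (Finset.notMem_empty y)
          rw [hfBdef]
          simp only
          rw [hcard, hL, List.map_map]
          rw [← List.sum_map_mul_left]
          refine congrArg List.sum (List.map_congr_left fun C hC => ?_)
          simp only [Function.comp_apply]
          rw [hperC C ((hmem_l C).mp hC)]
        -- cost of the chain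
        have hfB_chain : totalF pw cst fB chain
            = (L.map fun a => totalF pw cst a.2.1 a.2.2).sum := by
          rw [← hchain_cost]
          exact totalF_congr pw cst fun Z hZ => hdecomp Z (hZ.trans hchain_lab)
        refine ⟨T, hctf, hTnr, hTlab, ?_⟩
        intro T' hnr' hlab'
        obtain ⟨t0, t1, hnrS, hlabS, hoptS⟩ := hCF B₀ hB
        have hstep := hoptS T' hnr' ((Strategy.labelsIn_iff T' _).mpr hlab')
        refine le_trans ?_ hstep
        obtain ⟨_, h0, h1⟩ := hnrS
        have hroot0 : root ∉ t0.labels :=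
          Strategy.not_mem_labels_of_noRepeatFrom t0 h0 root (Finset.mem_insert_self _ _)
        have hroot1 : root ∉ t1.labels :=
          Strategy.not_mem_labels_of_noRepeatFrom t1 h1 root (Finset.mem_insert_self _ _)
        have hnrt1 : t1.noRepeat := Strategy.noRepeatFrom_anti t1 (Finset.empty_subset _) h1
        have hlabS' := (Strategy.labelsIn_iff _ _).mp hlabS
        have hlab1 : t1.labels ⊆ unionL (L.map Prod.fst) := by
          intro j hj
          have hjsub : j ∈ subAttrs H B₀ := hlabS' (Finset.mem_insert_of_mem (Finset.mem_union_right _ hj))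
          exact hUmem j (mem_subAttrs.mp hjsub) (fun he => hroot1 (he ▸ hj))
        rw [totalCostOn_eq_totalF, totalCostOn_eq_totalF, ← hfBdef]
        rw [hT, totalF_node pw cst hpw root Strategy.leaf chain
          (by simp [Strategy.labels]) hroot_chain]
        rw [totalF_node pw cst hpw root t0 t1 hroot0 hroot1]
        have hzero : totalF pw cst (fun Z => fB (insert root Z)) Strategy.leaf = 0 := by
          rw [totalF_leaf]
          rw [hfBdef]
          simp only
          rw [show insert root (∅ : Finset (AttrIdx H)) = {root} from rfl,
            Finset.sup_singleton]
          rw [show (root : AttrIdx H).val = B₀ from rfl]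
          simp
        have hX0 : 0 ≤ totalF pw cst (fun Z => fB (insert root Z)) t0 :=
          totalF_nonneg pw cst hpw hcst (fun Z => hfBnonneg _) t0
        -- lower bound on the cost of t1
        have hX1 : (L.map fun a => totalF pw cst a.2.1 a.2.2).sum
            ≤ totalF pw cst fB t1 := by
          set L2 := L.map (fun a => (a.1, a.2.1)) with hL2
          have hL2pair : L2.Pairwise (fun a b => Disjoint a.1 b.1) := by
            rw [hL2, List.pairwise_map]
            exact hLpair.imp (fun h => h)
          have hL2fst : L2.map Prod.fst = L.map Prod.fst := by
            rw [hL2, List.map_map]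
            rfl
          have hsplit := multiSplit pw cst hpw hcst L2 hL2pair t1 hnrt1
            (by rw [hL2fst]; exact hlab1)
          have hfun : (fun Z => (L2.map fun a => a.2 (Z ∩ a.1)).sum)
              = fun Z => (L.map fun a => a.2.1 (Z ∩ a.1)).sum := by
            funext Z
            rw [hL2, List.map_map]
            rfl
          rw [hfun] at hsplit
          have hcongr : totalF pw cst (fun Z => (L.map fun a => a.2.1 (Z ∩ a.1)).sum) t1
              = totalF pw cst fB t1 :=
            totalF_congr pw cst fun Z hZ => (hdecomp Z (hZ.trans hlab1)).symm
          rw [hcongr] at hsplit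
          refine le_trans ?_ hsplit
          have hmapeq : L2.map (fun a => val pw cst a.1 a.2)
              = L.map (fun a => val pw cst a.1 a.2.1) := by
            rw [hL2, List.map_map]
            rfl
          rw [hmapeq]
          refine list_sum_le_sum_map L _ _ fun a ha => ?_
          show totalF pw cst a.2.1 a.2.2 ≤ val pw cst a.1 a.2.1
          refine le_val pw cst a.1 a.2.1 ?_
          intro U hU hUS
          rw [hL] at ha
          obtain ⟨C, hC, rfl⟩ := List.mem_map.mp ha
          have hopt := (hTf C ((hmem_l C).mp hC)).2.2.2 U hU hUS
          rw [totalCostOn_eq_totalF, totalCostOn_eq_totalF] at hopt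
          exact hopt
        have hm1 : (1 - pw root) * (L.map fun a => totalF pw cst a.2.1 a.2.2).sum
            ≤ (1 - pw root) * totalF pw cst fB t1 :=
          mul_le_mul_of_nonneg_left hX1 (by linarith [(hpw root).2])
        have hm0 : 0 ≤ pw root * totalF pw cst (fun Z => fB (insert root Z)) t0 :=
          mul_nonneg (hpw root).1 hX0
        rw [hzero, hfB_chain]
        linarith

end Main
/-- **CF property on all subhierarchies implies CTF optimality (Theorem 2).**  In a
fixed hierarchy (tests of cost `c A > 0` and power `β A ∈ (0,1]`, mutually independent
under the background measure, unit postprocessing cost `c* > 0`), suppose that for every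
subhierarchy `ℬ` of `𝒜` rooted at some `B₀ ∈ 𝒜` (including `𝒜` itself) the
coarsest-first property holds: among strategies for `ℬ` there is one of minimal total
expected cost whose first performed test is the test for `B₀`.  Then the coarse-to-fine
strategy minimizes the total expected cost over all strategies for `𝒜`. -/
theorem ctf_optimal_of_cf_on_subhierarchies (H : Hierarchy Y) (β c : Finset Y → ℝ)
    (hβ : ∀ A ∈ H.attrs, 0 < β A ∧ β A ≤ 1) (hc : ∀ A ∈ H.attrs, 0 < c A)
    (cstar : ℝ) (hcstar : 0 < cstar)
    (hCF : ∀ B₀ : Finset Y, ∀ hB : B₀ ∈ H.attrs,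
      ∃ t0 t1 : Strategy (AttrIdx H),
        (Strategy.node ⟨B₀, hB⟩ t0 t1).noRepeat
        ∧ (Strategy.node ⟨B₀, hB⟩ t0 t1).labelsIn (subAttrs H B₀)
        ∧ ∀ T' : Strategy (AttrIdx H), T'.noRepeat → T'.labelsIn (subAttrs H B₀) →
            totalCostOn H (fun i => β i.val) (fun i => c i.val) cstar B₀
                (Strategy.node ⟨B₀, hB⟩ t0 t1)
              ≤ totalCostOn H (fun i => β i.val) (fun i => c i.val) cstar B₀ T') :
    ∃ T : Strategy (AttrIdx H), IsCTF H T ∧ T.noRepeat ∧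
      ∀ T' : Strategy (AttrIdx H), T'.noRepeat →
        totalCostOn H (fun i => β i.val) (fun i => c i.val) cstar Finset.univ T
          ≤ totalCostOn H (fun i => β i.val) (fun i => c i.val) cstar Finset.univ T' := by
  
  obtain ⟨T, hctf, hnr, hlab, hopt⟩ := main_ind H β c hβ hc cstar hcstar hCF
    (Finset.univ : Finset Y).card Finset.univ H.univ_mem (le_refl _)
  have hsubuniv : subAttrs H (Finset.univ : Finset Y) = Finset.univ := by
    ext i
    simp [subAttrs]
  refine ⟨T, ?_, hnr, ?_⟩
  · intro ω
    rw [hctf ω, hsubuniv]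
    refine Finset.filter_congr fun i _ => ?_
    constructor
    · intro h j hij
      exact h j hij (Finset.subset_univ _)
    · intro h j hij _
      exact h j hij
  · intro T' hnr'
    refine hopt T' hnr' ?_
    rw [hsubuniv]
    exact Finset.subset_univ _
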